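/- Let z₁, z₂ be standard Gaussians with correlation ρ ∈ (−1,1), and let a, b ∈ ℝ. With T₁, T₂ as above, E[z₁² · 1{z₁ ≥ a, z₂ ≥ b}] = (ρ√(1−ρ²)/(2π))·exp(−(a² − 2ρab + b²)/(2(1−ρ²))) + Φ₂(−a, −b, ρ) + (1/√(2π))·(a T₁ + ρ² b T₂). -/

import Mathlib

open MeasureTheory Real

/-- The standard normal probability density function. -/
noncomputable def stdGaussianPDF (t : ℝ) : ℝ :=
  (Real.sqrt (2 * Real.pi))⁻¹ * Real.exp (-t ^ 2 / 2)

/-- The standard normal cumulative distribution function. -/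
noncomputable def stdNormalCDF (x : ℝ) : ℝ :=
  ∫ t in Set.Iic x, stdGaussianPDF t

/-- Density of the bivariate standard Gaussian with correlation `ρ`. -/
noncomputable def bivStdGaussianPDF (ρ x y : ℝ) : ℝ :=
  (2 * Real.pi * Real.sqrt (1 - ρ ^ 2))⁻¹ *
    Real.exp (-(x ^ 2 - 2 * ρ * x * y + y ^ 2) / (2 * (1 - ρ ^ 2)))

/-- Joint CDF of the bivariate standard Gaussian with correlation `ρ`. -/
noncomputable def bivStdNormalCDF (a b ρ : ℝ) : ℝ :=
  ∫ p in Set.Iic a ×ˢ Set.Iic b, bivStdGaussianPDF ρ p.1 p.2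

/-!
With `s = √(1 - ρ²)`, the density factors as `φ(x) · φ((y - ρx)/s) / s`, so integrating out `y`
turns the quadrant integral into `∫_{x > a} x² φ(x) Φ((ρx - b)/s) dx`. Integration by parts
with `φ' = -x φ` splits this into the boundary term `a φ(a) Φ((ρa - b)/s)`, the integral
`∫_{x > a} φ(x) Φ((ρx - b)/s) dx = Φ₂(-a, -b, ρ)`, and `(ρ/s) ∫_{x > a} x φ(x) φ((ρx - b)/s) dx`.
Completing the square rewrites the last integrand as `φ(b) · x φ((x - ρb)/s)`, the first moment
of a shifted Gaussian over a half-line.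
-/

open Set Filter Topology

lemma stdGaussianPDF_nonneg (t : ℝ) : 0 ≤ stdGaussianPDF t := by
  unfold stdGaussianPDF; positivity

lemma stdGaussianPDF_le (t : ℝ) : stdGaussianPDF t ≤ (√(2 * π))⁻¹ := by
  unfold stdGaussianPDF
  refine mul_le_of_le_one_right (by positivity) (exp_le_one_iff.2 ?_)
  nlinarith [sq_nonneg t]

lemma continuous_stdGaussianPDF : Continuous stdGaussianPDF := by
  unfold stdGaussianPDF; fun_prop

lemma stdGaussianPDF_neg (t : ℝ) : stdGaussianPDF (-t) = stdGaussianPDF t := by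
  simp [stdGaussianPDF]

lemma hasDerivAt_stdGaussianPDF (t : ℝ) :
    HasDerivAt stdGaussianPDF (-t * stdGaussianPDF t) t := by
  have h : HasDerivAt (fun t : ℝ => -t ^ 2 / 2) (-t) t := by
    simpa using ((hasDerivAt_pow 2 t).neg.div_const 2).congr_deriv (by ring)
  unfold stdGaussianPDF
  exact (h.exp.const_mul _).congr_deriv (by ring)

lemma stdGaussianPDF_eq_mul_exp (t : ℝ) :
    stdGaussianPDF t = (√(2 * π))⁻¹ * exp (-(1 / 2) * t ^ 2) := by
  unfold stdGaussianPDF; ring_nf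

lemma integrable_pow_mul_stdGaussianPDF (n : ℕ) :
    Integrable fun x : ℝ => x ^ n * stdGaussianPDF x := by
  have h := integrable_rpow_mul_exp_neg_mul_sq (b := 1 / 2) (by norm_num)
    (s := n) (neg_one_lt_zero.trans_le n.cast_nonneg)
  refine (h.const_mul (√(2 * π))⁻¹).congr (.of_forall fun x => ?_)
  simp only [rpow_natCast, stdGaussianPDF_eq_mul_exp]
  ring

lemma integrable_stdGaussianPDF : Integrable stdGaussianPDF := by
  simpa using integrable_pow_mul_stdGaussianPDF 0

lemma integral_stdGaussianPDF : ∫ t, stdGaussianPDF t = 1 := by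
  simp_rw [stdGaussianPDF_eq_mul_exp]
  rw [integral_const_mul, integral_gaussian, show π / (1 / 2) = 2 * π by ring,
    inv_mul_cancel₀ (by positivity)]

lemma tendsto_pow_mul_stdGaussianPDF_atTop (n : ℕ) :
    Tendsto (fun x : ℝ => x ^ n * stdGaussianPDF x) atTop (𝓝 0) := by
  have h := rpow_mul_exp_neg_mul_sq_isLittleO_exp_neg (b := 1 / 2) (by norm_num) n
  have hexp : Tendsto (fun x : ℝ => exp (-(1 / 2 * x))) atTop (𝓝 0) :=
    tendsto_exp_neg_atTop_nhds_zero.comp (tendsto_id.const_mul_atTop (by norm_num))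
  have := (h.trans_tendsto (by simpa [neg_mul] using hexp)).const_mul (√(2 * π))⁻¹
  rw [mul_zero] at this
  refine this.congr fun x => ?_
  rw [rpow_natCast, stdGaussianPDF_eq_mul_exp]
  ring

lemma integral_Ioi_stdGaussianPDF (A : ℝ) :
    ∫ t in Ioi A, stdGaussianPDF t = stdNormalCDF (-A) := by
  rw [stdNormalCDF, ← integral_comp_neg_Ioi]
  simp_rw [stdGaussianPDF_neg]

lemma integral_Ioi_mul_stdGaussianPDF (A : ℝ) :
    ∫ t in Ioi A, t * stdGaussianPDF t = stdGaussianPDF A := by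
  have hderiv (t : ℝ) (_ : t ∈ Ici A) :
      HasDerivAt (fun t => -stdGaussianPDF t) (t * stdGaussianPDF t) t :=
    (hasDerivAt_stdGaussianPDF t).neg.congr_deriv (by ring)
  have hlim : Tendsto (fun t => -stdGaussianPDF t) atTop (𝓝 0) := by
    simpa using (tendsto_pow_mul_stdGaussianPDF_atTop 0).neg
  rw [integral_Ioi_of_hasDerivAt_of_tendsto' hderiv
    (by simpa using (integrable_pow_mul_stdGaussianPDF 1).integrableOn) hlim]
  ring

lemma stdNormalCDF_nonneg (x : ℝ) : 0 ≤ stdNormalCDF x :=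
  setIntegral_nonneg measurableSet_Iic fun t _ => stdGaussianPDF_nonneg t

lemma stdNormalCDF_le_one (x : ℝ) : stdNormalCDF x ≤ 1 :=
  integral_stdGaussianPDF ▸ setIntegral_le_integral integrable_stdGaussianPDF
    (.of_forall stdGaussianPDF_nonneg)

lemma hasDerivAt_stdNormalCDF (x : ℝ) : HasDerivAt stdNormalCDF (stdGaussianPDF x) x := by
  have hcdf : stdNormalCDF = fun y => stdNormalCDF 0 + ∫ t in (0 : ℝ)..y, stdGaussianPDF t := by
    ext y
    rw [← intervalIntegral.integral_Iic_sub_Iic integrable_stdGaussianPDF.integrableOn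
      integrable_stdGaussianPDF.integrableOn, stdNormalCDF, stdNormalCDF]
    ring
  rw [hcdf]
  exact (intervalIntegral.integral_hasDerivAt_right integrable_stdGaussianPDF.intervalIntegrable
    (continuous_stdGaussianPDF.stronglyMeasurableAtFilter _ _)
    continuous_stdGaussianPDF.continuousAt).const_add _

lemma integral_Ioi_comp_sub_div {E : Type*} [NormedAddCommGroup E] [NormedSpace ℝ E]
    (f : ℝ → E) {s : ℝ} (hs : 0 < s) (m c : ℝ) :
    ∫ y in Ioi c, f ((y - m) / s) = s • ∫ t in Ioi ((c - m) / s), f t := by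
  rw [← integral_indicator measurableSet_Ioi, ← integral_indicator measurableSet_Ioi]
  have hind : (Ioi c).indicator (fun y => f ((y - m) / s))
      = fun y => (Ioi ((c - m) / s)).indicator f ((y - m) / s) := by
    ext y
    simp only [indicator, mem_Ioi, div_lt_div_iff_of_pos_right hs, sub_lt_sub_iff_right]
  rw [hind, integral_sub_right_eq_self (fun y => (Ioi ((c - m) / s)).indicator f (y / s)) m,
    Measure.integral_comp_div, abs_of_pos hs]

lemma integrable_stdGaussianPDF_comp_sub_div {s : ℝ} (hs : s ≠ 0) (m : ℝ) :
    Integrable fun y : ℝ => stdGaussianPDF ((y - m) / s) :=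
  (integrable_stdGaussianPDF.comp_div hs).comp_sub_right m

lemma integral_stdGaussianPDF_comp_sub_div {s : ℝ} (hs : 0 < s) (m : ℝ) :
    ∫ y, stdGaussianPDF ((y - m) / s) = s := by
  rw [integral_sub_right_eq_self (fun y => stdGaussianPDF (y / s)) m,
    Measure.integral_comp_div, integral_stdGaussianPDF, smul_eq_mul, mul_one, abs_of_pos hs]

lemma integral_Ioi_mul_stdGaussianPDF_comp_sub_div {s : ℝ} (hs : 0 < s) (m a : ℝ) :
    ∫ x in Ioi a, x * stdGaussianPDF ((x - m) / s)
      = s * (s * stdGaussianPDF ((a - m) / s) + m * stdNormalCDF ((m - a) / s)) := by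
  have hsub := integral_Ioi_comp_sub_div (fun u => (s * u + m) * stdGaussianPDF u) hs m a
  simp only [mul_div_cancel₀ _ hs.ne', sub_add_cancel] at hsub
  rw [hsub, smul_eq_mul]
  have hint : IntegrableOn (fun t => s * (t * stdGaussianPDF t)) (Ioi ((a - m) / s)) := by
    simpa using ((integrable_pow_mul_stdGaussianPDF 1).const_mul s).integrableOn
  simp_rw [add_mul, mul_assoc]
  rw [integral_add hint (integrable_stdGaussianPDF.const_mul m).integrableOn,
    integral_const_mul, integral_const_mul, integral_Ioi_mul_stdGaussianPDF,
    integral_Ioi_stdGaussianPDF, ← neg_div, neg_sub]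

lemma integral_Ioi_sq_mul_stdGaussianPDF_mul {g g' : ℝ → ℝ} (hg : ∀ x, HasDerivAt g (g' x) x)
    {C C' : ℝ} (hgC : ∀ x, ‖g x‖ ≤ C) (hg'C : ∀ x, ‖g' x‖ ≤ C') (a : ℝ) :
    ∫ x in Ioi a, x ^ 2 * stdGaussianPDF x * g x
      = a * stdGaussianPDF a * g a + (∫ x in Ioi a, stdGaussianPDF x * g x)
        + ∫ x in Ioi a, x * stdGaussianPDF x * g' x := by
  have hg_meas : AEStronglyMeasurable g :=
    (continuous_iff_continuousAt.2 fun x => (hg x).continuousAt).aestronglyMeasurable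
  have hg'_meas : AEStronglyMeasurable g' := by
    rw [show g' = deriv g from funext fun x => (hg x).deriv.symm]
    exact (measurable_deriv g).aestronglyMeasurable
  have hint (n : ℕ) : IntegrableOn (fun x => x ^ n * stdGaussianPDF x * g x) (Ioi a) :=
    ((integrable_pow_mul_stdGaussianPDF n).mul_bdd hg_meas (.of_forall hgC)).integrableOn
  have hint₀ : IntegrableOn (fun x => stdGaussianPDF x * g x) (Ioi a) := by simpa using hint 0
  have hint₂₀ : IntegrableOn (fun x => x ^ 2 * stdGaussianPDF x * g x - stdGaussianPDF x * g x)
      (Ioi a) := (hint 2).sub hint₀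
  have hint' : IntegrableOn (fun x => x * stdGaussianPDF x * g' x) (Ioi a) := by
    simpa using ((integrable_pow_mul_stdGaussianPDF 1).mul_bdd hg'_meas
      (.of_forall hg'C)).integrableOn
  -- `-x φ(x) g(x)` is an antiderivative of `x² φ g - φ g - x φ g'`, since `φ' = -x φ`
  have hderiv (x : ℝ) (_ : x ∈ Ici a) : HasDerivAt (fun x => -x * stdGaussianPDF x * g x)
      (x ^ 2 * stdGaussianPDF x * g x - stdGaussianPDF x * g x
        - x * stdGaussianPDF x * g' x) x :=
    ((((hasDerivAt_id x).neg).mul (hasDerivAt_stdGaussianPDF x)).mul (hg x)).congr_deriv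
      (by simp only [Pi.mul_apply, Pi.neg_apply, id_eq]; ring)
  have hlim : Tendsto (fun x => -x * stdGaussianPDF x * g x) atTop (𝓝 0) := by
    simpa using (((tendsto_pow_mul_stdGaussianPDF_atTop 1).zero_mul_isBoundedUnder_le
      (isBoundedUnder_of ⟨C, fun x => hgC x⟩)).neg)
  have key : ∫ x in Ioi a, (x ^ 2 * stdGaussianPDF x * g x - stdGaussianPDF x * g x
      - x * stdGaussianPDF x * g' x) = 0 - -a * stdGaussianPDF a * g a :=
    integral_Ioi_of_hasDerivAt_of_tendsto' hderiv (hint₂₀.sub hint') hlim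
  rw [integral_sub hint₂₀ hint', integral_sub (hint 2) hint₀] at key
  linear_combination key

lemma integral_Ioi_sq_mul_stdGaussianPDF_mul_stdNormalCDF (c d s a : ℝ) :
    ∫ x in Ioi a, x ^ 2 * stdGaussianPDF x * stdNormalCDF ((c * x - d) / s)
      = a * stdGaussianPDF a * stdNormalCDF ((c * a - d) / s)
        + (∫ x in Ioi a, stdGaussianPDF x * stdNormalCDF ((c * x - d) / s))
        + c / s * ∫ x in Ioi a, x * stdGaussianPDF x * stdGaussianPDF ((c * x - d) / s) := by
  have hderiv (x : ℝ) : HasDerivAt (fun x => stdNormalCDF ((c * x - d) / s))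
      (c / s * stdGaussianPDF ((c * x - d) / s)) x := by
    have := (((hasDerivAt_id x).const_mul c).sub_const d).div_const s
    exact ((hasDerivAt_stdNormalCDF _).comp x (by simpa using this)).congr_deriv (by ring)
  have hbound (x : ℝ) : ‖c / s * stdGaussianPDF ((c * x - d) / s)‖ ≤ ‖c / s‖ * (√(2 * π))⁻¹ := by
    rw [norm_mul, Real.norm_of_nonneg (stdGaussianPDF_nonneg _)]
    exact mul_le_mul_of_nonneg_left (stdGaussianPDF_le _) (norm_nonneg _)
  rw [integral_Ioi_sq_mul_stdGaussianPDF_mul hderiv (C := 1)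
    (fun x => by rw [Real.norm_of_nonneg (stdNormalCDF_nonneg _)]; exact stdNormalCDF_le_one _)
    hbound, ← integral_const_mul]
  congr 2 with x
  ring

lemma bivStdGaussianPDF_comm (ρ x y : ℝ) :
    bivStdGaussianPDF ρ x y = bivStdGaussianPDF ρ y x := by
  unfold bivStdGaussianPDF; ring_nf

lemma bivStdGaussianPDF_neg_neg (ρ x y : ℝ) :
    bivStdGaussianPDF ρ (-x) (-y) = bivStdGaussianPDF ρ x y := by
  unfold bivStdGaussianPDF; ring_nf

lemma continuous_bivStdGaussianPDF (ρ : ℝ) :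
    Continuous fun p : ℝ × ℝ => bivStdGaussianPDF ρ p.1 p.2 := by
  unfold bivStdGaussianPDF; fun_prop

-- The conditional law of the second coordinate given the first, `x`, is `N(ρ x, 1 - ρ²)`.
lemma sqrt_mul_bivStdGaussianPDF {ρ : ℝ} (hρ : 0 < 1 - ρ ^ 2) (x y : ℝ) :
    √(1 - ρ ^ 2) * bivStdGaussianPDF ρ x y
      = stdGaussianPDF x * stdGaussianPDF ((y - ρ * x) / √(1 - ρ ^ 2)) := by
  have hs2 : √(1 - ρ ^ 2) ^ 2 = 1 - ρ ^ 2 := sq_sqrt hρ.le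
  have h2π : √(2 * π) ^ 2 = 2 * π := sq_sqrt (by positivity)
  unfold bivStdGaussianPDF stdGaussianPDF
  rw [mul_mul_mul_comm, ← exp_add, ← mul_assoc]
  congr 1
  · field_simp
    rw [h2π]
  · congr 1
    rw [div_pow, hs2]
    field_simp
    ring

lemma bivStdGaussianPDF_eq_div_mul {ρ : ℝ} (hρ : 0 < 1 - ρ ^ 2) (x y : ℝ) :
    bivStdGaussianPDF ρ x y
      = stdGaussianPDF x / √(1 - ρ ^ 2) * stdGaussianPDF ((y - ρ * x) / √(1 - ρ ^ 2)) := by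
  rw [div_mul_eq_mul_div, ← sqrt_mul_bivStdGaussianPDF hρ, mul_div_cancel_left₀ _
    (sqrt_pos.2 hρ).ne']

lemma integrable_mul_bivStdGaussianPDF {ρ : ℝ} (hρ : 0 < 1 - ρ ^ 2) {w : ℝ → ℝ}
    (hw : Measurable w) (hwi : Integrable fun x => w x * stdGaussianPDF x) :
    Integrable fun p : ℝ × ℝ => w p.1 * bivStdGaussianPDF ρ p.1 p.2 := by
  have hs : 0 < √(1 - ρ ^ 2) := sqrt_pos.2 hρ
  rw [Measure.volume_eq_prod]
  have hmeas : AEStronglyMeasurable (fun p : ℝ × ℝ => w p.1 * bivStdGaussianPDF ρ p.1 p.2)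
      (volume.prod volume) :=
    ((hw.comp measurable_fst).mul (continuous_bivStdGaussianPDF ρ).measurable).aestronglyMeasurable
  refine (integrable_prod_iff hmeas).2 ?_
  simp only [bivStdGaussianPDF_eq_div_mul hρ, ← mul_assoc]
  refine ⟨.of_forall fun x => (integrable_stdGaussianPDF_comp_sub_div hs.ne' _).const_mul _, ?_⟩
  have hnorm (x : ℝ) : ∫ y, ‖w x * (stdGaussianPDF x / √(1 - ρ ^ 2))
      * stdGaussianPDF ((y - ρ * x) / √(1 - ρ ^ 2))‖ = ‖w x * stdGaussianPDF x‖ := by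
    simp_rw [norm_mul, norm_div, Real.norm_of_nonneg (stdGaussianPDF_nonneg _),
      Real.norm_of_nonneg hs.le]
    rw [integral_const_mul, integral_stdGaussianPDF_comp_sub_div hs]
    field_simp
  simp_rw [hnorm]
  exact hwi.norm

lemma integral_Ici_bivStdGaussianPDF {ρ : ℝ} (hρ : 0 < 1 - ρ ^ 2) (x b : ℝ) :
    ∫ y in Ici b, bivStdGaussianPDF ρ x y
      = stdGaussianPDF x * stdNormalCDF ((ρ * x - b) / √(1 - ρ ^ 2)) := by
  have hs : 0 < √(1 - ρ ^ 2) := sqrt_pos.2 hρ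
  simp_rw [bivStdGaussianPDF_eq_div_mul hρ]
  rw [integral_Ici_eq_integral_Ioi, integral_const_mul, integral_Ioi_comp_sub_div _ hs,
    integral_Ioi_stdGaussianPDF, smul_eq_mul, ← neg_div, neg_sub]
  field_simp

lemma setIntegral_Ici_prod_Ici_mul_bivStdGaussianPDF {ρ : ℝ} (hρ : 0 < 1 - ρ ^ 2) {w : ℝ → ℝ}
    (hw : Measurable w) (hwi : Integrable fun x => w x * stdGaussianPDF x) (a b : ℝ) :
    ∫ p in Ici a ×ˢ Ici b, w p.1 * bivStdGaussianPDF ρ p.1 p.2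
      = ∫ x in Ici a, w x * stdGaussianPDF x * stdNormalCDF ((ρ * x - b) / √(1 - ρ ^ 2)) := by
  rw [Measure.volume_eq_prod, setIntegral_prod _
    (integrable_mul_bivStdGaussianPDF hρ hw hwi).integrableOn]
  refine setIntegral_congr_fun measurableSet_Ici fun x _ => ?_
  dsimp only
  rw [integral_const_mul, integral_Ici_bivStdGaussianPDF hρ, mul_assoc]

lemma bivStdNormalCDF_neg_neg (ρ a b : ℝ) :
    bivStdNormalCDF (-a) (-b) ρ = ∫ p in Ici a ×ˢ Ici b, bivStdGaussianPDF ρ p.1 p.2 := by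
  have hpre : Neg.neg ⁻¹' (Iic (-a) ×ˢ Iic (-b)) = Ici a ×ˢ Ici b := by
    ext p
    simp
  rw [bivStdNormalCDF, ← (Measure.measurePreserving_neg volume).setIntegral_preimage_emb
    (MeasurableEquiv.neg (ℝ × ℝ)).measurableEmbedding, hpre]
  simp_rw [Prod.fst_neg, Prod.snd_neg, bivStdGaussianPDF_neg_neg]

lemma integral_Ioi_mul_stdGaussianPDF_mul_stdGaussianPDF {ρ : ℝ} (hρ : 0 < 1 - ρ ^ 2)
    (a b : ℝ) :
    ∫ x in Ioi a, x * stdGaussianPDF x * stdGaussianPDF ((ρ * x - b) / √(1 - ρ ^ 2))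
      = √(1 - ρ ^ 2) * (√(1 - ρ ^ 2)
          * (stdGaussianPDF b * stdGaussianPDF ((a - ρ * b) / √(1 - ρ ^ 2)))
          + ρ * b * (stdGaussianPDF b * stdNormalCDF ((ρ * b - a) / √(1 - ρ ^ 2)))) := by
  -- completing the square: both products equal `√(1 - ρ²) · bivStdGaussianPDF ρ x b`
  have hswap (x : ℝ) : stdGaussianPDF x * stdGaussianPDF ((ρ * x - b) / √(1 - ρ ^ 2))
      = stdGaussianPDF b * stdGaussianPDF ((x - ρ * b) / √(1 - ρ ^ 2)) := by
    rw [← stdGaussianPDF_neg ((ρ * x - b) / _), ← neg_div, neg_sub,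
      ← sqrt_mul_bivStdGaussianPDF hρ, ← sqrt_mul_bivStdGaussianPDF hρ, bivStdGaussianPDF_comm]
  simp_rw [mul_assoc, hswap, mul_left_comm _ (stdGaussianPDF b)]
  rw [integral_const_mul, integral_Ioi_mul_stdGaussianPDF_comp_sub_div (sqrt_pos.2 hρ)]
  ring

/-- For a bivariate standard Gaussian `(z₁, z₂)` with correlation `ρ ∈ (−1,1)`:
`E[z₁² 1{z₁ ≥ a, z₂ ≥ b}] = (ρ√(1−ρ²)/(2π)) exp(−(a² − 2ρab + b²)/(2(1−ρ²)))
  + Φ₂(−a, −b, ρ) + (1/√(2π)) (a T₁ + ρ² b T₂)`. -/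
theorem square_truncated_bivariate (a b ρ : ℝ) (hρ : ρ ∈ Set.Ioo (-1 : ℝ) 1) :
    (∫ p in Set.Ici a ×ˢ Set.Ici b, p.1 ^ 2 * bivStdGaussianPDF ρ p.1 p.2) =
      ρ * Real.sqrt (1 - ρ ^ 2) / (2 * Real.pi) *
          Real.exp (-(a ^ 2 - 2 * ρ * a * b + b ^ 2) / (2 * (1 - ρ ^ 2))) +
        bivStdNormalCDF (-a) (-b) ρ +
        (Real.sqrt (2 * Real.pi))⁻¹ *
          (a * (Real.exp (-a ^ 2 / 2) * stdNormalCDF ((ρ * a - b) / Real.sqrt (1 - ρ ^ 2))) +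
            ρ ^ 2 * b * (Real.exp (-b ^ 2 / 2) *
              stdNormalCDF ((ρ * b - a) / Real.sqrt (1 - ρ ^ 2)))) := by
  have hρ' : 0 < 1 - ρ ^ 2 := by nlinarith [hρ.1, hρ.2]
  have hcdf : bivStdNormalCDF (-a) (-b) ρ
      = ∫ x in Ioi a, stdGaussianPDF x * stdNormalCDF ((ρ * x - b) / √(1 - ρ ^ 2)) := by
    rw [bivStdNormalCDF_neg_neg, ← integral_Ici_eq_integral_Ioi]
    simpa using setIntegral_Ici_prod_Ici_mul_bivStdGaussianPDF hρ' (w := fun _ => 1)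
      measurable_const (by simpa using integrable_stdGaussianPDF) a b
  have hcorner : stdGaussianPDF b * stdGaussianPDF ((a - ρ * b) / √(1 - ρ ^ 2))
      = (2 * π)⁻¹ * exp (-(a ^ 2 - 2 * ρ * a * b + b ^ 2) / (2 * (1 - ρ ^ 2))) := by
    rw [← sqrt_mul_bivStdGaussianPDF hρ', bivStdGaussianPDF_comm, bivStdGaussianPDF]
    field_simp
  rw [setIntegral_Ici_prod_Ici_mul_bivStdGaussianPDF hρ' (w := fun x => x ^ 2) (by fun_prop)
      (integrable_pow_mul_stdGaussianPDF 2), integral_Ici_eq_integral_Ioi,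
    integral_Ioi_sq_mul_stdGaussianPDF_mul_stdNormalCDF, hcdf,
    integral_Ioi_mul_stdGaussianPDF_mul_stdGaussianPDF hρ', hcorner]
  unfold stdGaussianPDF
  field_simp
  ring
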